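/- arXiv:0709.0416 — 4 statements merged into one kernel-verified Lean document; each statement's English description precedes it below -/
import Mathlib

section
/- Let G be a fully residually free group and let x, y ∈ G be two non-commuting elements. Then x and y generate a free subgroup of rank 2. -/
/-!
A homomorphism `φ` to a free group that is injective on `{x * y, y * x}` keeps `φ x` and `φ y`
non-commuting, so it suffices to treat two non-commuting elements `a, b` of a free group. By
Nielsen–Schreier the subgroup they generate is free; its abelianization is a quotient of `ℤ²`, so
it has rank at most `2`, and being non-abelian it has rank exactly `2`. The map
`F₂ → ⟨a, b⟩ ≅ F₂` is then a surjective endomorphism of `F₂`, hence injective because finitely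
generated residually finite groups are Hopfian. Free groups are residually finite: a reduced word
of length `n` acts nontrivially on `{0, …, n}` when each generator is sent to a permutation that
steps back across each of its occurrences.
-/

/-- A group is fully residually free if every finite subset can be mapped injectively
into a free group by a group homomorphism. -/
def IsFullyResiduallyFree (G : Type*) [Group G] : Prop :=
  ∀ S : Finset G, ∃ (ι : Type) (φ : G →* FreeGroup ι), Set.InjOn φ ↑S

open Function Equiv Cardinal

universe u v

theorem Equiv.Perm.list_prod_apply_eq_of_forall_getElem {β : Type*} (ps : List (Perm β))
    (p : ℕ → β) (h : ∀ k (hk : k < ps.length), ps[k] (p (k + 1)) = p k) :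
    ps.prod (p ps.length) = p 0 := by
  induction ps generalizing p with
  | nil => rfl
  | cons q ps ih =>
    rw [List.prod_cons, Perm.mul_apply, List.length_cons,
      ih (fun k => p (k + 1)) fun k hk => h (k + 1) (by simpa using hk)]
    exact h 0 (by simp)

instance MonoidHom.finite_of_fg {G P : Type*} [Group G] [Group.FG G] [Group P] [Finite P] :
    Finite (G →* P) := by
  obtain ⟨S, hS⟩ := Group.fg_def.mp ‹_›
  refine Finite.of_injective (fun f : G →* P => fun s : S => f s) fun f g hfg => ?_
  exact MonoidHom.eq_of_eqOn_dense hS fun s hs => congrFun hfg ⟨s, hs⟩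

theorem Group.ResiduallyFinite.injective_of_surjective {G : Type*} [Group G] [Group.FG G]
    [Group.ResiduallyFinite G] {f : G →* G} (hf : Surjective f) : Injective f := by
  refine (injective_iff_map_eq_one f).mpr fun g hg => ?_
  by_contra hne
  obtain ⟨H, hgH⟩ := Group.exists_finiteIndexNormalSubgroup_notMem g hne
  let π := QuotientGroup.mk' H.toSubgroup
  -- Precomposition with `f` is injective on the finite set `G →* G ⧸ H`, hence surjective:
  -- `π` factors through `f` and so kills `g`.
  have : Finite (G ⧸ H.toSubgroup) := Subgroup.finite_quotient_of_finiteIndex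
  obtain ⟨χ, hχ⟩ : ∃ χ : G →* G ⧸ H.toSubgroup, χ.comp f = π :=
    Finite.surjective_of_injective (fun χ₁ χ₂ h => (MonoidHom.cancel_right hf).mp h) π
  refine hgH ((QuotientGroup.eq_one_iff g).mp ?_)
  change π g = 1
  rw [← hχ, MonoidHom.comp_apply, hg, map_one]

namespace FreeGroup

variable {α : Type u} {β : Type v}

theorem IsReduced.snd_eq_of_fst_eq {L : List (α × Bool)} (hL : IsReduced L) {i : ℕ}
    (hi : i + 1 < L.length) (h : L[i].1 = L[i + 1].1) : L[i].2 = L[i + 1].2 :=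
  List.isChain_iff_getElem.mp hL i hi h

/-- Reducedness makes the prescriptions `k + 1 ↦ k` (for `c` at `k`) and `k ↦ k + 1`
(for `c⁻¹` at `k`) a partial bijection, which extends to a permutation. -/
theorem IsReduced.exists_perm_succ_eq_castSucc {L : List (α × Bool)} (hL : IsReduced L) (c : α) :
    ∃ σ : Perm (Fin (L.length + 1)), ∀ k : Fin L.length, L[(k : ℕ)].1 = c →
      cond L[(k : ℕ)].2 σ σ⁻¹ k.succ = k.castSucc := by
  let D := {k : Fin L.length // L[(k : ℕ)].1 = c}
  have hsign : ∀ k k' : D, (k' : ℕ) = k + 1 → L[(k.1 : ℕ)].2 = L[(k'.1 : ℕ)].2 := by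
    rintro ⟨k, hk⟩ ⟨k', hk'⟩ (hkk' : (k' : ℕ) = k + 1)
    have := hL.snd_eq_of_fst_eq (i := k) (by omega) (by simp only [← hkk', hk, hk'])
    simpa only [← hkk'] using this
  have hinj : ∀ b : Bool, Injective fun k : D =>
      if L[(k.1 : ℕ)].2 = b then k.1.succ else k.1.castSucc := by
    rintro b k k' h
    have h1 := hsign k k'
    have h2 := hsign k' k
    apply Subtype.ext
    simp only at h
    split_ifs at h with hb hb' hb'
    · exact Fin.succ_injective _ h
    · have hkk' : (k' : ℕ) = k + 1 := by simpa using (congrArg Fin.val h).symm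
      exact absurd ((h1 hkk').symm.trans hb) hb'
    · have hkk' : (k : ℕ) = k' + 1 := by simpa using congrArg Fin.val h
      exact absurd ((h2 hkk').symm.trans hb') hb
    · exact Fin.castSucc_injective _ h
  obtain ⟨σ, hσ⟩ := Perm.exists_extending_pair _ _ (hinj true) (hinj false)
  refine ⟨σ, fun k hk => ?_⟩
  have := hσ ⟨k, hk⟩
  cases hb : L[(k : ℕ)].2 <;>
    simp only [hb, cond_true, cond_false, if_true, Bool.false_eq_true, if_false] at this ⊢
  · rw [Perm.inv_eq_iff_eq, this]
  · exact this

theorem lift_mk_apply_last_eq_zero {L : List (α × Bool)} (σ : α → Perm (Fin (L.length + 1)))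
    (hσ : ∀ k : Fin L.length, cond L[(k : ℕ)].2 (σ L[(k : ℕ)].1) (σ L[(k : ℕ)].1)⁻¹ k.succ =
      k.castSucc) :
    lift σ (mk L) (Fin.last _) = 0 := by
  rw [lift_mk]
  have := Perm.list_prod_apply_eq_of_forall_getElem
    (L.map fun x => cond x.2 (σ x.1) (σ x.1)⁻¹) (Fin.ofNat (L.length + 1)) fun k hk => by
      simp only [List.length_map] at hk
      simp only [List.getElem_map]
      convert hσ ⟨k, hk⟩ using 2 <;> ext
      · simp [Nat.mod_eq_of_lt (by omega : k + 1 < L.length + 1)]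
      · simp [Nat.mod_eq_of_lt (by omega : k < L.length + 1)]
  rw [List.length_map] at this
  convert this using 2 <;> ext <;> simp

theorem exists_perm_hom_apply_ne_one {w : FreeGroup α} (hw : w ≠ 1) :
    ∃ (n : ℕ) (ρ : FreeGroup α →* Perm (Fin (n + 1))), ρ w ≠ 1 := by
  classical
  choose σ hσ using (isReduced_toWord (x := w)).exists_perm_succ_eq_castSucc
  refine ⟨_, lift σ, fun h1 => hw ?_⟩
  have := lift_mk_apply_last_eq_zero σ fun k => hσ _ k rfl
  rw [mk_toWord, h1] at this
  simpa [Fin.ext_iff, toWord_eq_nil_iff] using this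

instance : Group.ResiduallyFinite (FreeGroup α) :=
  Group.residuallyFinite_of_forall_exists_finite_monoidHom fun _ hw =>
    let ⟨_, ρ, hρ⟩ := exists_perm_hom_apply_ne_one hw
    ⟨_, inferInstance, inferInstance, ρ, hρ⟩

theorem lift_cardinalMk_le_of_surjective {f : FreeGroup α →* FreeGroup β} (hf : Surjective f) :
    Cardinal.lift.{u} #β ≤ Cardinal.lift.{v} #α := by
  let fab : FreeAbelianGroup α →+ FreeAbelianGroup β := (Abelianization.map f).toAdditive
  have hfab : Surjective fab := by
    intro z
    induction z using QuotientGroup.induction_on with | H y => ?_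
    obtain ⟨x, rfl⟩ := hf y
    exact ⟨Abelianization.of x, Abelianization.map_of f x⟩
  rw [(FreeAbelianGroup.basis β).mk_eq_rank'', (FreeAbelianGroup.basis α).mk_eq_rank'']
  exact LinearMap.lift_rank_le_of_surjective fab.toIntLinearMap hfab

theorem injective_of_surjective_of_lift_cardinalMk_le [Finite α] {f : FreeGroup α →* FreeGroup β}
    (hf : Surjective f) (h : Cardinal.lift.{v} #α ≤ Cardinal.lift.{u} #β) : Injective f := by
  obtain ⟨e⟩ := lift_mk_eq'.mp ((lift_cardinalMk_le_of_surjective hf).antisymm h)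
  have : Injective ((freeGroupCongr e).toMonoidHom.comp f) :=
    Group.ResiduallyFinite.injective_of_surjective ((freeGroupCongr e).surjective.comp hf)
  exact Injective.of_comp (f := freeGroupCongr e) this

theorem commute_of_subsingleton [Subsingleton β] (g h : FreeGroup β) : Commute g h := by
  cases isEmpty_or_nonempty β
  · exact Subsingleton.elim _ _
  · have : Unique β := uniqueOfSubsingleton (Classical.arbitrary β)
    let _ := IsCyclic.commGroup (α := FreeGroup β)
    exact mul_comm g h

theorem injective_lift_of_not_commute {a b : FreeGroup α} (hab : a * b ≠ b * a) :
    Injective (lift fun i : Fin 2 => if i = 0 then a else b) := by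
  set φ := lift fun i : Fin 2 => if i = 0 then a else b
  -- `IsFreeGroup φ.range` is the Nielsen–Schreier instance `subgroupIsFreeOfIsFree`.
  let e := IsFreeGroup.toFreeGroup φ.range
  let q := e.toMonoidHom.comp φ.rangeRestrict
  have hq : Surjective q := e.surjective.comp φ.rangeRestrict_surjective
  have hq_ne : ¬Commute (q (of 0)) (q (of 1)) := fun h => hab <| by
    rw [Commute, SemiconjBy, ← _root_.map_mul, ← _root_.map_mul] at h
    simpa [φ] using congrArg Subtype.val (e.injective h)
  have : Nontrivial (IsFreeGroup.Generators φ.range) := by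
    by_contra h
    rw [not_nontrivial_iff_subsingleton] at h
    exact hq_ne (commute_of_subsingleton _ _)
  have h2 : Cardinal.lift.{u} #(Fin 2) ≤ Cardinal.lift.{0} #(IsFreeGroup.Generators φ.range) := by
    simpa [two_le_iff_one_lt] using one_lt_iff_nontrivial.mpr this
  exact MonoidHom.rangeRestrict_injective_iff.mp
    (Injective.of_comp (f := e) (injective_of_surjective_of_lift_cardinalMk_le hq h2))

end FreeGroup

/-- **Non-commuting elements of a fully residually free group generate a free group of
rank 2**: the homomorphism from the free group on two generators sending the generators
to `x` and `y` is injective. -/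
theorem noncommuting_generate_free {G : Type*} [Group G]
    (hG : IsFullyResiduallyFree G) (x y : G) (hxy : x * y ≠ y * x) :
    Function.Injective
      (FreeGroup.lift (fun i : Fin 2 => if i = 0 then x else y) : FreeGroup (Fin 2) →* G) := by
  classical
  obtain ⟨ι, φ, hφ⟩ := hG {x * y, y * x}
  have hφxy : φ x * φ y ≠ φ y * φ x := by
    rw [← map_mul, ← map_mul]
    exact fun h => hxy (hφ (by simp) (by simp) h)
  have hcomp : φ.comp (FreeGroup.lift fun i : Fin 2 => if i = 0 then x else y) =
      FreeGroup.lift fun i => if i = 0 then φ x else φ y := by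
    ext i
    simp [apply_ite φ]
  refine Injective.of_comp (f := φ) ?_
  rw [← MonoidHom.coe_comp, hcomp]
  exact FreeGroup.injective_lift_of_not_commute hφxy
end

section
/- A nonabelian limit group admits a surjective homomorphism onto a nonabelian free group; consequently, for a nonabelian limit group A, the rational vector space Hom(A, ℚ) has dimension at least 2. -/
/-- A limit group is a finitely generated fully residually free group. -/
def IsLimitGroup (G : Type*) [Group G] : Prop :=
  Group.FG G ∧ IsFullyResiduallyFree G

/-! Full residual freeness gives `φ : A →* F(X)` keeping a non-commuting pair non-commuting.
The range of `φ` is free by Nielsen–Schreier and `A` surjects onto it; it has at least two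
generators, since free groups of rank at most one are abelian. Two distinct generators `i ≠ j`
give the independent homomorphisms `A → ℚ` counting the exponent sums of `i` and of `j`. -/

namespace FreeGroup

theorem commute_of_subsingleton_s7 {κ : Type*} [Subsingleton κ] (a b : FreeGroup κ) :
    Commute a b := by
  induction a using FreeGroup.induction_on with
  | C1 => exact Commute.one_left b
  | of i =>
    induction b using FreeGroup.induction_on with
    | C1 => exact Commute.one_right _
    | of j => rw [Subsingleton.elim i j]
    | inv_of j h => exact h.inv_right
    | mul x y hx hy => exact hx.mul_right hy
  | inv_of i h => exact h.inv_left
  | mul x y hx hy => exact hx.mul_left hy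

theorem nontrivial_of_not_commute {κ : Type*} {a b : FreeGroup κ} (h : ¬Commute a b) :
    Nontrivial κ := by
  by_contra hκ
  rw [not_nontrivial_iff_subsingleton] at hκ
  exact h (commute_of_subsingleton_s7 a b)

section ExponentSum

variable (R : Type*) [Ring R] {ι : Type*} [DecidableEq ι]

def exponentSum (k : ι) : FreeGroup ι →* Multiplicative R :=
  FreeGroup.lift (Pi.mulSingle k (Multiplicative.ofAdd 1))

variable {R}

@[simp]
theorem exponentSum_of_self (k : ι) : exponentSum R k (of k) = Multiplicative.ofAdd 1 := by
  simp [exponentSum]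

@[simp]
theorem exponentSum_of_of_ne {k l : ι} (h : l ≠ k) : exponentSum R k (of l) = 1 := by
  simp [exponentSum, h]

theorem exponentSum_comp_independent {A : Type*} [Group A] {f : A →* FreeGroup ι}
    (hf : Function.Surjective f) {i j : ι} (hij : i ≠ j) (q₁ q₂ : R)
    (hq : ∀ x : A, q₁ * Multiplicative.toAdd (exponentSum R i (f x)) +
      q₂ * Multiplicative.toAdd (exponentSum R j (f x)) = 0) :
    q₁ = 0 ∧ q₂ = 0 := by
  obtain ⟨a, ha⟩ := hf (of i)
  obtain ⟨b, hb⟩ := hf (of j)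
  have hqa := hq a
  have hqb := hq b
  simp only [ha, hb, exponentSum_of_self, exponentSum_of_of_ne hij, exponentSum_of_of_ne hij.symm,
    toAdd_ofAdd, toAdd_one, mul_one, mul_zero, add_zero, zero_add] at hqa hqb
  exact ⟨hqa, hqb⟩

end ExponentSum

end FreeGroup

theorem IsFullyResiduallyFree.exists_not_commute_map {G : Type*} [Group G]
    (hG : IsFullyResiduallyFree G) {x y : G} (hxy : ¬Commute x y) :
    ∃ (ι : Type) (φ : G →* FreeGroup ι), ¬Commute (φ x) (φ y) := by
  classical
  obtain ⟨ι, φ, hφ⟩ := hG {x * y, y * x}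
  refine ⟨ι, φ, fun hcomm => hxy (hφ (by simp) (by simp) ?_)⟩
  rw [map_mul, map_mul]
  exact hcomm.eq

theorem MonoidHom.exists_surjective_freeGroup_of_not_commute {G : Type*} [Group G] {ι : Type}
    (φ : G →* FreeGroup ι) {x y : G} (hxy : ¬Commute (φ x) (φ y)) :
    ∃ (κ : Type) (i j : κ), i ≠ j ∧ ∃ f : G →* FreeGroup κ, Function.Surjective f := by
  let e := IsFreeGroup.toFreeGroup φ.range
  let f : G →* FreeGroup (IsFreeGroup.Generators φ.range) := e.toMonoidHom.comp φ.rangeRestrict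
  have hf : ¬Commute (f x) (f y) := fun hcomm =>
    hxy (by simpa [f] using hcomm.map (φ.range.subtype.comp e.symm.toMonoidHom))
  have := FreeGroup.nontrivial_of_not_commute hf
  obtain ⟨i, j, hij⟩ := exists_pair_ne (IsFreeGroup.Generators φ.range)
  exact ⟨_, i, j, hij, f, e.surjective.comp φ.rangeRestrict_surjective⟩

/-- **Nonabelian limit groups surject onto nonabelian free groups.**
A nonabelian limit group `A` admits a surjective homomorphism onto a free group of rank
at least `2`; consequently the `ℚ`-vector space `Hom(A, ℚ)` has dimension at least `2`,
i.e. there exist two homomorphisms `A → ℚ` which are linearly independent over `ℚ`. -/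
theorem nonabelian_limit_group_surjects_free {A : Type*} [Group A]
    (hA : IsLimitGroup A) (hnab : ¬∀ x y : A, x * y = y * x) :
    (∃ (ι : Type) (i j : ι), i ≠ j ∧ ∃ f : A →* FreeGroup ι, Function.Surjective f) ∧
    (∃ f₁ f₂ : A →* Multiplicative ℚ, ∀ q₁ q₂ : ℚ,
      (∀ x : A, q₁ * Multiplicative.toAdd (f₁ x) + q₂ * Multiplicative.toAdd (f₂ x) = 0) →
      q₁ = 0 ∧ q₂ = 0) := by
  classical
  obtain ⟨x, y, hxy⟩ : ∃ x y : A, ¬Commute x y := by simpa [Commute, SemiconjBy] using hnab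
  obtain ⟨ι, φ, hφ⟩ := hA.2.exists_not_commute_map hxy
  obtain ⟨κ, i, j, hij, f, hf⟩ := φ.exists_surjective_freeGroup_of_not_commute hφ
  exact ⟨⟨κ, i, j, hij, f, hf⟩, (FreeGroup.exponentSum ℚ i).comp f,
    (FreeGroup.exponentSum ℚ j).comp f, FreeGroup.exponentSum_comp_independent hf hij⟩
end

section
/- Limit groups are locally indicable: every nontrivial finitely generated subgroup admits a surjective homomorphism onto ℤ. -/
/-!
A nontrivial subgroup `H` of a fully residually free group is again fully residually free, so
some homomorphism `ψ` from `H` to a free group is nontrivial. By Nielsen–Schreier its image is a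
nontrivial free group, which maps onto `ℤ` by sending every free generator to `1`.
-/

namespace IsFreeGroup

variable {K : Type*} [Group K] [IsFreeGroup K]

theorem nonempty_generators_of_nontrivial [Nontrivial K] : Nonempty (Generators K) := by
  by_contra hempty
  have : IsEmpty (Generators K) := not_nonempty_iff.mp hempty
  have hid : MonoidHom.id K = 1 := ext_hom isEmptyElim
  obtain ⟨k, hk⟩ := exists_ne (1 : K)
  exact hk (DFunLike.congr_fun hid k)

theorem exists_surjective_multiplicative_int [Nontrivial K] :
    ∃ f : K →* Multiplicative ℤ, Function.Surjective f := by
  obtain ⟨a⟩ := nonempty_generators_of_nontrivial (K := K)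
  refine ⟨lift fun _ => Multiplicative.ofAdd 1, fun n => ⟨of a ^ n.toAdd, ?_⟩⟩
  rw [map_zpow, lift_of, ← ofAdd_zsmul, smul_eq_mul, mul_one, ofAdd_toAdd]

end IsFreeGroup

theorem exists_surjective_multiplicative_int_of_ne_one {H : Type*} [Group H] {ι : Type*}
    (ψ : H →* FreeGroup ι) {h : H} (hψ : ψ h ≠ 1) :
    ∃ f : H →* Multiplicative ℤ, Function.Surjective f := by
  have : Nontrivial ψ.range := ⟨⟨⟨ψ h, h, rfl⟩, 1, fun heq => hψ (congrArg Subtype.val heq)⟩⟩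
  obtain ⟨f, hf⟩ := IsFreeGroup.exists_surjective_multiplicative_int (K := ψ.range)
  exact ⟨f.comp ψ.rangeRestrict, hf.comp ψ.rangeRestrict_surjective⟩

namespace IsFullyResiduallyFree

variable {G : Type*} [Group G]

theorem of_injective {H : Type*} [Group H] (hG : IsFullyResiduallyFree G) {i : H →* G}
    (hi : Function.Injective i) : IsFullyResiduallyFree H := by
  intro S
  obtain ⟨ι, φ, hφ⟩ := hG (S.map ⟨i, hi⟩)
  refine ⟨ι, φ.comp i, fun x hx y hy hxy => hi (hφ ?_ ?_ hxy)⟩ <;>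
    exact Finset.mem_map_of_mem _ ‹_›

theorem subgroup (hG : IsFullyResiduallyFree G) (H : Subgroup G) : IsFullyResiduallyFree H :=
  hG.of_injective H.subtype_injective

theorem exists_hom_ne_one (hG : IsFullyResiduallyFree G) {g : G} (hg : g ≠ 1) :
    ∃ (ι : Type) (φ : G →* FreeGroup ι), φ g ≠ 1 := by
  classical
  obtain ⟨ι, φ, hφ⟩ := hG {g, 1}
  refine ⟨ι, φ, fun hφg => hg (hφ (by simp) (by simp) ?_)⟩
  rw [hφg, map_one]

theorem exists_surjective_multiplicative_int [Nontrivial G] (hG : IsFullyResiduallyFree G) :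
    ∃ f : G →* Multiplicative ℤ, Function.Surjective f := by
  obtain ⟨g, hg⟩ := exists_ne (1 : G)
  obtain ⟨ι, φ, hφ⟩ := hG.exists_hom_ne_one hg
  exact exists_surjective_multiplicative_int_of_ne_one φ hφ

end IsFullyResiduallyFree

theorem limit_group_locally_indicable_general {G : Type*} [Group G] (hG : IsLimitGroup G)
    (H : Subgroup G) (hne : H ≠ ⊥) :
    ∃ f : H →* Multiplicative ℤ, Function.Surjective f := by
  have : Nontrivial H := (Subgroup.nontrivial_iff_ne_bot H).mpr hne
  exact (hG.2.subgroup H).exists_surjective_multiplicative_int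

/-- **Limit groups are locally indicable**: every nontrivial finitely generated
subgroup of a limit group admits a surjective homomorphism onto `ℤ`. -/
theorem limit_group_locally_indicable {G : Type*} [Group G] (hG : IsLimitGroup G)
    (H : Subgroup G) (hne : H ≠ ⊥) (hfg : Group.FG H) :
    ∃ f : H →* Multiplicative ℤ, Function.Surjective f :=
  limit_group_locally_indicable_general hG H hne
end

section
/- Let G act 1-acylindrically on a tree T, let γ ∈ G be hyperbolic with axis L, and let u be a vertex of T not on L. If the geodesic from u to L contains an edge f (other than a fixed chosen edge e whose stabilizer is A's edge group), then no nontrivial power of γ fixes f, and no nontrivial element of the stabilizer of u fixes f once d(u, L) ≥ 1 and the action is 1-acylindrical; consequently A = Stab(u) and ⟨γ⟩ generate the free product A * ⟨γ⟩ in G. -/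
/-!
Write `f = vw` with `w` on the axis `L`, and split `T` along `f` into the `v`-side `X` (vertices
closer to `v` than to `w`) and the `w`-side `Y`; `u` lies in `X` and, since `v ∉ L`, so does no
vertex of `L`. If `a ≠ 1` fixes `u` and moved some `x ∈ Y` into `Y`, then `w` would lie on the
geodesics from `u` to `x` and to `a • x` at the same distance from `u`, so `a • w = w`; then `a`
fixes the geodesic from `u` to `w`, of length `≥ 2`, against `1`-acylindricity. From a vertex of
`X` every vertex of `L` is reached through `w`, so `w` is its nearest point on `L`; if `γ ^ k`
kept some `z ∈ X` in `X`, the nearest point of `γ ^ k • z` on `L` would be both `w` and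
`γ ^ k • w`. The Ping-Pong Lemma on `X` and `Y` then gives the free product.
-/

namespace SimpleGraph

variable {V : Type*} {G : SimpleGraph V}

theorem Walk.dist_add_dist_of_mem_support {u v z : V} {p : G.Walk u v}
    (hp : p.length = G.dist u v) (hz : z ∈ p.support) :
    G.dist u z + G.dist z v = G.dist u v := by
  classical
  rw [← length_eq_dist_of_subwalk hp (p.isSubwalk_takeUntil hz),
    ← length_eq_dist_of_subwalk hp (p.isSubwalk_dropUntil hz), ← Walk.length_append,
    p.take_spec hz, hp]

theorem edist_smul_smul {H : Type*} [Group H] [MulAction H V]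
    (hact : ∀ (g : H) (x y : V), G.Adj x y → G.Adj (g • x) (g • y)) (g : H) (x y : V) :
    G.edist (g • x) (g • y) = G.edist x y := by
  have key : ∀ (g : H) (x y : V), G.edist (g • x) (g • y) ≤ G.edist x y := fun g x y => by
    by_cases h : G.Reachable x y
    · obtain ⟨p, hp⟩ := h.exists_walk_length_eq_edist
      rw [← hp, ← p.length_map ⟨(g • ·), hact g _ _⟩]
      exact edist_le _
    · simp [edist_eq_top_of_not_reachable h]
  refine le_antisymm (key g x y) ?_
  simpa using key g⁻¹ (g • x) (g • y)

theorem dist_smul_smul {H : Type*} [Group H] [MulAction H V]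
    (hact : ∀ (g : H) (x y : V), G.Adj x y → G.Adj (g • x) (g • y)) (g : H) (x y : V) :
    G.dist (g • x) (g • y) = G.dist x y := by
  rw [dist, dist, edist_smul_smul hact]

theorem Walk.exists_adj_of_getLast?_edges_eq_some {u w : V} {p : G.Walk u w} {f : Sym2 V}
    (hf : p.edges.getLast? = some f) : ∃ v ∈ p.support, G.Adj v w ∧ f = s(v, w) := by
  obtain ⟨hne, rfl⟩ := List.mem_getLast?_eq_getLast hf
  have hnil : ¬p.Nil := mt edges_eq_nil.mpr hne
  exact ⟨p.penultimate, p.fst_mem_support_of_mem_edges (p.mk_penultimate_end_mem_edges hnil),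
    p.adj_penultimate hnil, p.getLast_edges_eq_mk_penultimate_end hne⟩

theorem smul_ne_of_translate {H : Type*} [Group H] [MulAction H V] {c : ℤ → V}
    (hc : ∀ m n, G.dist (c m) (c n) = (m - n).natAbs) {g : H} {δ : ℤ}
    (hg : ∀ m, g • c m = c (m + δ)) (hδ : δ ≠ 0) (n : ℤ) : g • c n ≠ c n := by
  intro h
  have := hc (n + δ) n
  rw [← hg, h, dist_self, add_sub_cancel_left] at this
  omega

namespace IsTree

variable (hT : G.IsTree)
include hT

theorem dist_eq_length_of_isPath {x y : V} {p : G.Walk x y} (hp : p.IsPath) :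
    G.dist x y = p.length := by
  obtain ⟨q, hq, hql⟩ := hT.connected.exists_path_of_dist x y
  rw [← hql, (hT.existsUnique_path x y).unique hp hq]

theorem eq_of_dist_add_dist_eq {x y a b : V}
    (ha : G.dist x a + G.dist a y = G.dist x y) (hb : G.dist x b + G.dist b y = G.dist x y)
    (hab : G.dist x a = G.dist x b) : a = b := by
  have key : ∀ c, G.dist x c + G.dist c y = G.dist x y →
      ∃ r : G.Walk x y, r.IsPath ∧ r.getVert (G.dist x c) = c := by
    intro c hc
    obtain ⟨p, -, hp⟩ := hT.connected.exists_path_of_dist x c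
    obtain ⟨q, -, hq⟩ := hT.connected.exists_path_of_dist c y
    refine ⟨p.append q, (p.append q).isPath_of_length_eq_dist (by simp [hp, hq, hc]), ?_⟩
    simp [Walk.getVert_append', ← hp]
  obtain ⟨r, hr, hra⟩ := key a ha
  obtain ⟨r', hr', hrb⟩ := key b hb
  rw [← hra, ← hrb, hab, (hT.existsUnique_path x y).unique hr hr']

theorem apply_eq_self_of_dist_add_dist_eq {φ : V → V}
    (hφ : ∀ x y, G.dist (φ x) (φ y) = G.dist x y) {x y z : V} (hx : φ x = x) (hy : φ y = y)
    (hz : G.dist x z + G.dist z y = G.dist x y) : φ z = z := by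
  have hxz : G.dist x (φ z) = G.dist x z := by simpa [hx] using hφ x z
  have hzy : G.dist (φ z) y = G.dist z y := by simpa [hy] using hφ z y
  exact hT.eq_of_dist_add_dist_eq (by rw [hxz, hzy, hz]) hz hxz

theorem mem_support_of_dist_lt {v w z y : V} (hvw : G.Adj v w)
    (hz : G.dist z v < G.dist z w) (hy : G.dist y w < G.dist y v) (q : G.Walk z y) :
    w ∈ q.support := by
  -- `vw` is a bridge, so the walk `a.reverse ++ q ++ b` from `v` to `w` crosses it, and the
  -- geodesics `a`, `b` do not.
  obtain ⟨a, -, ha⟩ := hT.connected.exists_path_of_dist z v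
  obtain ⟨b, -, hb⟩ := hT.connected.exists_path_of_dist y w
  have hwa : w ∉ a.support := fun h => by
    have := a.dist_add_dist_of_mem_support ha h
    omega
  have hvb : v ∉ b.support := fun h => by
    have := b.dist_add_dist_of_mem_support hb h
    omega
  have hbridge := isBridge_iff_forall_walk_mem_edges.mp
    (isAcyclic_iff_forall_adj_isBridge.mp hT.isAcyclic hvw) (a.reverse.append (q.append b))
  simp only [Walk.edges_append, Walk.edges_reverse, List.mem_append, List.mem_reverse] at hbridge
  rcases hbridge with h | h | h
  · exact absurd (a.snd_mem_support_of_mem_edges h) hwa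
  · exact q.snd_mem_support_of_mem_edges h
  · exact absurd (b.fst_mem_support_of_mem_edges h) hvb

theorem dist_eq_dist_add_dist_of_dist_lt {v w z y : V} (hvw : G.Adj v w)
    (hz : G.dist z v < G.dist z w) (hy : G.dist y w < G.dist y v) :
    G.dist z y = G.dist z w + G.dist w y := by
  obtain ⟨q, -, hq⟩ := hT.connected.exists_path_of_dist z y
  exact (q.dist_add_dist_of_mem_support hq (hT.mem_support_of_dist_lt hvw hz hy q)).symm

theorem dist_lt_of_dist_eq_natAbs {c : ℤ → V}
    (hc : ∀ m n, G.dist (c m) (c n) = (m - n).natAbs) {v w : V} (hvw : G.Adj v w) {n₀ : ℤ}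
    (hw : c n₀ = w) (hv : v ∉ Set.range c) (m : ℤ) :
    G.dist (c m) w < G.dist (c m) v := by
  subst hw
  have hv₁ : G.dist v (c n₀) = 1 := dist_eq_one_iff_adj.mpr hvw
  rcases hT.dist_eq_dist_add_one_of_adj (c m) hvw with h | h
  · omega
  · -- Then `v` lies between `c m` and `w`, at the distance from `c m` of the neighbour of `w` on
    -- the axis towards `c m`; so `v` is that neighbour.
    have hm : m ≠ n₀ := by
      rintro rfl
      simp at h
    obtain ⟨j, hj⟩ : ∃ j, (m - j).natAbs + (j - n₀).natAbs = (m - n₀).natAbs ∧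
        (j - n₀).natAbs = 1 :=
      ⟨if m < n₀ then n₀ - 1 else n₀ + 1, by split_ifs <;> omega⟩
    refine absurd ⟨j, hT.eq_of_dist_add_dist_eq (x := c m) (y := c n₀) ?_ ?_ ?_⟩ hv
    all_goals simp only [hc] at h ⊢; omega

theorem dist_eq_dist_add_natAbs_of_dist_lt {c : ℤ → V}
    (hc : ∀ m n, G.dist (c m) (c n) = (m - n).natAbs) {v w : V} (hvw : G.Adj v w) {n₀ : ℤ}
    (hw : c n₀ = w) (hv : v ∉ Set.range c) {z : V} (hz : G.dist z v < G.dist z w) (m : ℤ) :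
    G.dist z (c m) = G.dist z w + (n₀ - m).natAbs := by
  rw [hT.dist_eq_dist_add_dist_of_dist_lt hvw hz (hT.dist_lt_of_dist_eq_natAbs hc hvw hw hv m),
    ← hw, hc]

variable {H : Type*} [Group H] [MulAction H V]
  (hact : ∀ (g : H) (x y : V), G.Adj x y → G.Adj (g • x) (g • y))
include hact

theorem dist_smul_lt_of_smul_ne {v w u : V} (hvw : G.Adj v w) (hu : G.dist u v < G.dist u w)
    {a : H} (hau : a • u = u) (haw : a • w ≠ w) {x : V} (hx : G.dist x w < G.dist x v) :
    G.dist (a • x) v < G.dist (a • x) w := by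
  refine lt_of_le_of_ne (not_lt.mp fun hax => haw ?_) (hT.dist_ne_of_adj _ hvw)
  have hux := hT.dist_eq_dist_add_dist_of_dist_lt hvw hu hx
  have huax := hT.dist_eq_dist_add_dist_of_dist_lt hvw hu hax
  have hisom : ∀ y, G.dist u (a • y) = G.dist u y := fun y => by
    rw [← dist_smul_smul hact a u y, hau]
  refine hT.eq_of_dist_add_dist_eq (x := u) (y := a • x) ?_ huax.symm (hisom w)
  rw [hisom, dist_smul_smul hact, hisom, hux]

theorem dist_smul_lt_of_translate {c : ℤ → V}
    (hc : ∀ m n, G.dist (c m) (c n) = (m - n).natAbs) {v w : V} (hvw : G.Adj v w) {n₀ : ℤ}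
    (hw : c n₀ = w) (hv : v ∉ Set.range c)
    {g : H} {δ : ℤ} (hg : ∀ m, g • c m = c (m + δ)) (hδ : δ ≠ 0)
    {z : V} (hz : G.dist z v < G.dist z w) : G.dist (g • z) w < G.dist (g • z) v := by
  by_contra hgz
  have hgz : G.dist (g • z) v < G.dist (g • z) w :=
    lt_of_le_of_ne (not_lt.mp hgz) (hT.dist_ne_of_adj _ hvw)
  have hisom : ∀ m, G.dist (g • z) (c (m + δ)) = G.dist z (c m) := fun m => by
    rw [← hg, dist_smul_smul hact]
  have h₁ := hisom n₀
  have h₂ := hisom (n₀ - δ)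
  simp only [hT.dist_eq_dist_add_natAbs_of_dist_lt hc hvw hw hv hgz,
    hT.dist_eq_dist_add_natAbs_of_dist_lt hc hvw hw hv hz] at h₁ h₂
  omega

end IsTree

end SimpleGraph

theorem zpow_smul_eq_of_smul_eq_add {H α : Type*} [Group H] [MulAction H α] {γ : H}
    {c : ℤ → α} {d : ℤ} (h : ∀ n, γ • c n = c (n + d)) (k n : ℤ) :
    γ ^ k • c n = c (n + k * d) := by
  induction k using Int.induction_on generalizing n with
  | zero => simp
  | succ k ih => rw [zpow_add_one, mul_smul, h, ih]; ring_nf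
  | pred k ih =>
    have hinv : γ⁻¹ • c n = c (n - d) := by rw [inv_smul_eq_iff, h, sub_add_cancel]
    rw [zpow_sub_one, mul_smul, hinv, ih]; ring_nf

theorem not_isOfFinOrder_of_zpow_smul_ne {G α : Type*} [Group G] [MulAction G α] {γ : G}
    {x : α} (h : ∀ k : ℤ, k ≠ 0 → γ ^ k • x ≠ x) : ¬IsOfFinOrder γ := fun hfin => by
  obtain ⟨k, hk, h1⟩ := isOfFinOrder_iff_zpow_eq_one.mp hfin
  exact h k hk (by rw [h1, one_smul])

open Monoid Pointwise in
theorem Monoid.Coprod.lift_subtype_injective_of_ping_pong {G α : Type*} [Group G]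
    [MulAction G α] (H K : Subgroup G) (hK : 3 ≤ Cardinal.mk K) {X Y : Set α}
    (hX : X.Nonempty) (hY : Y.Nonempty) (hXY : Disjoint X Y)
    (hHY : ∀ h ∈ H, h ≠ 1 → h • Y ⊆ X) (hKX : ∀ k ∈ K, k ≠ 1 → k • X ⊆ Y) :
    Function.Injective (Coprod.lift H.subtype K.subtype) := by
  let S : Bool → Subgroup G := fun b => cond b K H
  let φ : Coprod H K →* CoprodI (fun b => S b) :=
    Coprod.lift (CoprodI.of (M := fun b => S b) (i := false))
      (CoprodI.of (M := fun b => S b) (i := true))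
  let ψ : CoprodI (fun b => S b) →* Coprod H K :=
    CoprodI.lift fun b => Bool.rec (motive := fun b => S b →* Coprod H K)
      Coprod.inl Coprod.inr b
  have hψφ : ψ.comp φ = MonoidHom.id _ := by
    ext <;> simp [φ, ψ]
  have hfactor : Coprod.lift H.subtype K.subtype =
      (CoprodI.lift fun b => (S b).subtype).comp φ := by
    ext <;> simp [φ]
  have hpp : Pairwise fun i j => ∀ h : S i, h ≠ 1 →
      (S i).subtype h • cond j Y X ⊆ cond i Y X := by
    rintro (_ | _) (_ | _) hij h hh <;> simp at hij
    · exact hHY h h.2 (by simpa using hh)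
    · exact hKX h h.2 (by simpa using hh)
  rw [hfactor]
  refine (CoprodI.lift_injective_of_ping_pong _ (Or.inr ⟨true, hK⟩) (fun b => cond b Y X)
    (fun b => by cases b <;> assumption) ?_ hpp).comp
    (Function.LeftInverse.injective (g := ψ) (DFunLike.congr_fun hψφ))
  rintro (_ | _) (_ | _) hij <;> simp_all [Function.onFun, disjoint_comm]

open SimpleGraph in
theorem ping_pong_step_general {V G : Type*} [Group G] [MulAction G V]
    (T : SimpleGraph V) (hT : T.IsTree)
    (hact : ∀ (g : G) (x y : V), T.Adj x y → T.Adj (g • x) (g • y))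
    (hacyl : ∀ (g : G) (x y : V) (q : T.Walk x y), q.IsPath → 1 < q.length →
      (∀ z ∈ q.support, g • z = z) → g = 1)
    (γ : G) (c : ℤ → V)
    (hgeo : ∀ m n : ℤ, T.dist (c m) (c n) = (m - n).natAbs)
    (d : ℤ) (hd : 0 < d) (htrans : ∀ n : ℤ, γ • c n = c (n + d))
    (u : V)
    {w : V} (hw : w ∈ Set.range c)
    (p : T.Walk u w) (hp : p.IsPath) (hlen : 2 ≤ p.length)
    (hnear : ∀ x ∈ p.support, x ≠ w → x ∉ Set.range c)
    (f : Sym2 V)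
    (hflast : p.edges.getLast? = some f) :
    (∀ k : ℤ, k ≠ 0 → ∃ x ∈ f, γ ^ k • x ≠ x) ∧
    (∀ g ∈ MulAction.stabilizer G u, g ≠ 1 → ∃ x ∈ f, g • x ≠ x) ∧
    Function.Injective
      (Monoid.Coprod.lift (MulAction.stabilizer G u).subtype
        (Subgroup.zpowers γ).subtype) := by
  obtain ⟨n₀, hn₀⟩ := hw
  obtain ⟨v, hvp, hvw, rfl⟩ := p.exists_adj_of_getLast?_edges_eq_some hflast
  have hv : v ∉ Set.range c := hnear v hvp hvw.ne
  have hpgeo : p.length = T.dist u w := (hT.dist_eq_length_of_isPath hp).symm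
  have hu : T.dist u v < T.dist u w := by
    have := p.dist_add_dist_of_mem_support hpgeo hvp
    rw [dist_eq_one_iff_adj.mpr hvw] at this
    omega
  have hγ : ∀ k : ℤ, k ≠ 0 → γ ^ k • w ≠ w := fun k hk => hn₀ ▸
    smul_ne_of_translate hgeo (zpow_smul_eq_of_smul_eq_add htrans k) (mul_ne_zero hk hd.ne') n₀
  have hA : ∀ a ∈ MulAction.stabilizer G u, a ≠ 1 → a • w ≠ w := fun a ha ha1 haw =>
    ha1 <| hacyl a u w p hp hlen fun z hz => hT.apply_eq_self_of_dist_add_dist_eq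
      (dist_smul_smul hact a) ha haw (p.dist_add_dist_of_mem_support hpgeo hz)
  refine ⟨fun k hk => ⟨w, Sym2.mem_mk_right v w, hγ k hk⟩,
    fun a ha ha1 => ⟨w, Sym2.mem_mk_right v w, hA a ha ha1⟩, ?_⟩
  refine Monoid.Coprod.lift_subtype_injective_of_ping_pong _ _
    (Cardinal.natCast_lt_aleph0.le.trans <| Cardinal.aleph0_le_mk_iff.mpr <|
      (infinite_zpowers.mpr (not_isOfFinOrder_of_zpow_smul_ne hγ)).to_subtype)
    (X := {z | T.dist z v < T.dist z w}) (Y := {z | T.dist z w < T.dist z v})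
    ⟨v, show T.dist v v < T.dist v w by simp [dist_eq_one_iff_adj.mpr hvw]⟩
    ⟨w, show T.dist w w < T.dist w v by simp [dist_eq_one_iff_adj.mpr hvw.symm]⟩
    (Set.disjoint_left.mpr fun _ h₁ h₂ => lt_asymm (α := ℕ) h₁ h₂) ?_ ?_
  · rintro a ha ha1 _ ⟨x, hx, rfl⟩
    exact hT.dist_smul_lt_of_smul_ne hact hvw hu ha (hA a ha ha1) hx
  · rintro _ ⟨k, rfl⟩ hk _ ⟨x, hx, rfl⟩
    exact hT.dist_smul_lt_of_translate hact hgeo hvw hn₀ hv (zpow_smul_eq_of_smul_eq_add htrans k)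
      (mul_ne_zero (by rintro rfl; simp at hk) hd.ne') hx

/-- **Ping-pong step in the proof of Theorem 4.1.**
`G` acts `1`-acylindrically on a tree `T`; `γ` is hyperbolic with axis `L` (the image
of the bi-infinite geodesic `c`, translated by `γ` through `d > 0`); `u` is a vertex
not on `L`; `p` is the geodesic from `u` to `L` (meeting `L` only at its endpoint `w`),
of length at least `2`, whose last edge is `f`, with `f` distinct from the chosen edge
`e`.  Then no nontrivial power of `γ` fixes `f`, no nontrivial element of
`A = Stab(u)` fixes `f`, and `A` and `⟨γ⟩` generate their free product `A * ⟨γ⟩` in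
`G` (the canonical map `A * ⟨γ⟩ → G` is injective). -/
theorem ping_pong_step {V G : Type*} [Group G] [MulAction G V]
    (T : SimpleGraph V) (hT : T.IsTree)
    (hact : ∀ (g : G) (x y : V), T.Adj x y → T.Adj (g • x) (g • y))
    (hacyl : ∀ (g : G) (x y : V) (q : T.Walk x y), q.IsPath → 1 < q.length →
      (∀ z ∈ q.support, g • z = z) → g = 1)
    (γ : G) (c : ℤ → V)
    (hgeo : ∀ m n : ℤ, T.dist (c m) (c n) = (m - n).natAbs)
    (d : ℤ) (hd : 0 < d) (htrans : ∀ n : ℤ, γ • c n = c (n + d))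
    (u : V) (hu : u ∉ Set.range c)
    {w : V} (hw : w ∈ Set.range c)
    (p : T.Walk u w) (hp : p.IsPath) (hlen : 2 ≤ p.length)
    (hnear : ∀ x ∈ p.support, x ≠ w → x ∉ Set.range c)
    (e f : Sym2 V) (he : e ∈ T.edgeSet)
    (hflast : p.edges.getLast? = some f) (hfe : f ≠ e) :
    (∀ k : ℤ, k ≠ 0 → ∃ x ∈ f, γ ^ k • x ≠ x) ∧
    (∀ g ∈ MulAction.stabilizer G u, g ≠ 1 → ∃ x ∈ f, g • x ≠ x) ∧
    Function.Injective
      (Monoid.Coprod.lift (MulAction.stabilizer G u).subtype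
        (Subgroup.zpowers γ).subtype) :=
  ping_pong_step_general T hT hact hacyl γ c hgeo d hd htrans u hw p hp hlen hnear f hflast
end
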